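/- Let ρ_∞ be a strictly positive density matrix on finite-dimensional H such that ρ_∞ ⊗ ρ_∞ commutes with every U(σ). Then for every density matrix ρ, Tr[log(ρ_∞) · (ρ ⋆ ρ)] = Tr[log(ρ_∞) · ρ]; i.e., log(ρ_∞) is a collision invariant. -/

import Mathlib

open Matrix MeasureTheory
open scoped Matrix.Norms.L2Operator ComplexOrder

/-- Tensor (Kronecker) product of operators on `H = ℂ^n`, as an operator on `H ⊗ H`. -/
def tensorMat {n : ℕ} (A B : Matrix (Fin n) (Fin n) ℂ) :
    Matrix (Fin n × Fin n) (Fin n × Fin n) ℂ :=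
  Matrix.of fun p q => A p.1 q.1 * B p.2 q.2

/-- Partial trace over the second tensor factor. -/
noncomputable def ptrace2 {n : ℕ} (M : Matrix (Fin n × Fin n) (Fin n × Fin n) ℂ) :
    Matrix (Fin n) (Fin n) ℂ :=
  Matrix.of fun a b => ∑ k : Fin n, M (a, k) (b, k)

/-- The tensor swap unitary on `H ⊗ H`. -/
def swapMat {n : ℕ} : Matrix (Fin n × Fin n) (Fin n × Fin n) ℂ :=
  Matrix.of fun p q => if p.1 = q.2 ∧ p.2 = q.1 then (1 : ℂ) else 0

/-- The averaged conjugation operator `Q(X) = ∫ U(σ) X U(σ)* dν(σ)` on `B(H ⊗ H)`. -/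
noncomputable def Qop {C : Type*} [MeasurableSpace C] {n : ℕ}
    (ν : Measure C) (U : C → Matrix (Fin n × Fin n) (Fin n × Fin n) ℂ)
    (X : Matrix (Fin n × Fin n) (Fin n × Fin n) ℂ) :
    Matrix (Fin n × Fin n) (Fin n × Fin n) ℂ :=
  ∫ σ, U σ * X * (U σ)ᴴ ∂ν

/-- The quantum Wild convolution `A ⋆ B = Tr₂[Q(A ⊗ B)]`. -/
noncomputable def wildConv {C : Type*} [MeasurableSpace C] {n : ℕ}
    (ν : Measure C) (U : C → Matrix (Fin n × Fin n) (Fin n × Fin n) ℂ)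
    (A B : Matrix (Fin n) (Fin n) ℂ) : Matrix (Fin n) (Fin n) ℂ :=
  ptrace2 (Qop ν U (tensorMat A B))

/-!
Put `M = L ⊗ 1 + 1 ⊗ L`, so that `exp M = ρ_∞ ⊗ ρ_∞`. Being Hermitian, `M` is the logarithm of
`exp M` in the functional calculus, so every `U(σ)` commutes with `M` and `Q` fixes `M`.
Self-adjointness of `Q` then gives `Tr[M Q(ρ ⊗ ρ)] = Tr[M (ρ ⊗ ρ)] = 2 Tr[L ρ]`, while the swap
invariance of `Q(ρ ⊗ ρ)` makes the two halves of `Tr[M Q(ρ ⊗ ρ)]` equal, each being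
`Tr[L (ρ ⋆ ρ)]`.
-/

open scoped Kronecker

theorem IsSelfAdjoint.commute_of_commute_exp {A : Type*} [NormedRing A] [StarRing A]
    [NormedAlgebra ℝ A] [ContinuousFunctionalCalculus ℝ A IsSelfAdjoint] {a b : A}
    (ha : IsSelfAdjoint a) (h : Commute b (NormedSpace.exp a)) : Commute b a := by
  have := (h.symm.cfc_real Real.log).symm
  rwa [← CFC.log, CFC.log_exp a ha] at this

namespace Matrix

variable {l m n p : Type*}

theorem trace_submatrix_equiv [Fintype m] [Fintype n] {R : Type*} [AddCommMonoid R]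
    (A : Matrix m m R) (e : n ≃ m) : (A.submatrix e e).trace = A.trace :=
  e.sum_comp fun i => A i i

theorem trace_mul_eq_of_submatrix_eq [Fintype m] {R : Type*} [NonUnitalNonAssocSemiring R]
    (e : m ≃ m) {A B X : Matrix m m R} (hA : A.submatrix e e = B) (hX : X.submatrix e e = X) :
    (A * X).trace = (B * X).trace := by
  rw [← trace_submatrix_equiv (A * X) e, ← submatrix_mul_equiv A X e e e, hA, hX]

theorem kronecker_submatrix_swap {α : Type*} [CommMagma α] (A : Matrix l m α)
    (B : Matrix n p α) : (A ⊗ₖ B).submatrix Prod.swap Prod.swap = B ⊗ₖ A := by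
  ext i j
  exact mul_comm _ _

theorem continuous_kronecker_const_right {𝔸 : Type*} [NormedCommRing 𝔸] (B : Matrix n p 𝔸) :
    Continuous fun A : Matrix l m 𝔸 => A ⊗ₖ B :=
  continuous_pi fun _ => continuous_pi fun j =>
    ((continuous_apply j.1).comp (continuous_apply _)).mul continuous_const

theorem continuous_kronecker_const_left {𝔸 : Type*} [NormedCommRing 𝔸] (A : Matrix l m 𝔸) :
    Continuous fun B : Matrix n p 𝔸 => A ⊗ₖ B :=
  continuous_pi fun _ => continuous_pi fun j =>
    continuous_const.mul ((continuous_apply j.2).comp (continuous_apply _))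

variable [Fintype m] [DecidableEq m] [Fintype n] [DecidableEq n] {𝕜 : Type*} [RCLike 𝕜]

theorem exp_kronecker_one (A : Matrix m m 𝕜) :
    NormedSpace.exp (A ⊗ₖ (1 : Matrix n n 𝕜)) = NormedSpace.exp A ⊗ₖ 1 := by
  let f := (kroneckerAlgEquiv m n 𝕜).toAlgHom.comp Algebra.TensorProduct.includeLeft
  have hf : ∀ A, f A = A ⊗ₖ (1 : Matrix n n 𝕜) := fun A => by simp [f]
  have := open scoped Norms.Operator in
    NormedSpace.map_exp f (funext hf ▸ continuous_kronecker_const_right 1) A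
  rw [hf, hf] at this
  exact this.symm

theorem exp_one_kronecker (B : Matrix n n 𝕜) :
    NormedSpace.exp ((1 : Matrix m m 𝕜) ⊗ₖ B) = 1 ⊗ₖ NormedSpace.exp B := by
  let f := (kroneckerAlgEquiv m n 𝕜).toAlgHom.comp Algebra.TensorProduct.includeRight
  have hf : ∀ B, f B = (1 : Matrix m m 𝕜) ⊗ₖ B := fun B => by simp [f]
  have := open scoped Norms.Operator in
    NormedSpace.map_exp f (funext hf ▸ continuous_kronecker_const_left 1) B
  rw [hf, hf] at this
  exact this.symm

theorem exp_kronecker_one_add_one_kronecker (A : Matrix m m 𝕜) (B : Matrix n n 𝕜) :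
    NormedSpace.exp (A ⊗ₖ 1 + 1 ⊗ₖ B) = NormedSpace.exp A ⊗ₖ NormedSpace.exp B := by
  have hcomm : Commute (A ⊗ₖ (1 : Matrix n n 𝕜)) ((1 : Matrix m m 𝕜) ⊗ₖ B) := by
    simp only [Commute, SemiconjBy, ← mul_kronecker_mul, mul_one, one_mul]
  rw [exp_add_of_commute _ _ hcomm, exp_kronecker_one, exp_one_kronecker, ← mul_kronecker_mul,
    mul_one, one_mul]

end Matrix

section

variable {n : ℕ}

theorem tensorMat_eq_kronecker (A B : Matrix (Fin n) (Fin n) ℂ) : tensorMat A B = A ⊗ₖ B := rfl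

theorem swapMat_mul_mul_swapMat_conjTranspose (X : Matrix (Fin n × Fin n) (Fin n × Fin n) ℂ) :
    swapMat * X * swapMatᴴ = X.submatrix Prod.swap Prod.swap := by
  have hS : (swapMat : Matrix (Fin n × Fin n) (Fin n × Fin n) ℂ) =
      (Equiv.prodComm (Fin n) (Fin n)).toPEquiv.toMatrix := by
    ext p q
    simp [swapMat, PEquiv.toMatrix_apply, Prod.ext_iff, eq_comm, and_comm]
  have hSH : (swapMat : Matrix (Fin n × Fin n) (Fin n × Fin n) ℂ)ᴴ = swapMat := by
    ext p q
    simp [swapMat, conjTranspose_apply, eq_comm, and_comm, apply_ite star]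
  rw [hSH, hS, PEquiv.toMatrix_toPEquiv_mul, PEquiv.mul_toMatrix_toPEquiv, submatrix_submatrix]
  rfl

theorem trace_mul_ptrace2 (L : Matrix (Fin n) (Fin n) ℂ)
    (X : Matrix (Fin n × Fin n) (Fin n × Fin n) ℂ) :
    (L * ptrace2 X).trace = (L ⊗ₖ 1 * X).trace := by
  simp only [trace, diag, mul_apply, ptrace2, kronecker_apply, of_apply, Fintype.sum_prod_type,
    one_apply, mul_ite, mul_one, mul_zero, ite_mul, zero_mul, Finset.mul_sum, Finset.sum_ite_eq,
    Finset.mem_univ, if_true]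
  exact Finset.sum_congr rfl fun a _ => Finset.sum_comm

theorem Qop_eq_self_of_forall_commute {C : Type*} [MeasurableSpace C] (ν : Measure C)
    [IsProbabilityMeasure ν] {U : C → Matrix (Fin n × Fin n) (Fin n × Fin n) ℂ}
    (hU : ∀ σ, U σ ∈ unitaryGroup (Fin n × Fin n) ℂ)
    {M : Matrix (Fin n × Fin n) (Fin n × Fin n) ℂ} (hM : ∀ σ, Commute (U σ) M) :
    Qop ν U M = M := by
  have h : ∀ σ, U σ * M * (U σ)ᴴ = M := fun σ => by
    rw [(hM σ).eq, mul_assoc, ← star_eq_conjTranspose, mem_unitaryGroup_iff.mp (hU σ), mul_one]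
  simp [Qop, h]

end

theorem log_steady_state_is_collision_invariant_general {C : Type*} [MeasurableSpace C] {n : ℕ}
    (ν : Measure C) [IsProbabilityMeasure ν]
    (U : C → Matrix (Fin n × Fin n) (Fin n × Fin n) ℂ)
    (hUunit : ∀ σ, U σ ∈ Matrix.unitaryGroup (Fin n × Fin n) ℂ)
    (hswap : ∀ X : Matrix (Fin n × Fin n) (Fin n × Fin n) ℂ,
      Qop ν U (swapMat * X * swapMatᴴ) = swapMat * Qop ν U X * swapMatᴴ)
    (hQsa : ∀ X Y : Matrix (Fin n × Fin n) (Fin n × Fin n) ℂ,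
      ((Qop ν U X)ᴴ * Y).trace = (Xᴴ * Qop ν U Y).trace)
    (ρinf : Matrix (Fin n) (Fin n) ℂ)
    (hρinfcomm : ∀ σ, Commute (U σ) (tensorMat ρinf ρinf))
    (L : Matrix (Fin n) (Fin n) ℂ) (hL : L.IsHermitian)
    (hexpL : NormedSpace.exp L = ρinf)
    (ρ : Matrix (Fin n) (Fin n) ℂ) (hρtr : ρ.trace = 1) :
    (L * wildConv ν U ρ ρ).trace = (L * ρ).trace := by
  simp only [wildConv, tensorMat_eq_kronecker] at hρinfcomm ⊢
  set M := L ⊗ₖ 1 + 1 ⊗ₖ L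
  set X := Qop ν U (ρ ⊗ₖ ρ)
  have hM : M.IsHermitian := by
    simp only [M, IsHermitian, conjTranspose_add, conjTranspose_kronecker, conjTranspose_one, hL.eq]
  have hQM : Qop ν U M = M := Qop_eq_self_of_forall_commute ν hUunit fun σ =>
    hM.isSelfAdjoint.commute_of_commute_exp <| by
      rw [exp_kronecker_one_add_one_kronecker, hexpL]
      exact hρinfcomm σ
  have hX : X.submatrix Prod.swap Prod.swap = X := by
    rw [← swapMat_mul_mul_swapMat_conjTranspose, ← hswap, swapMat_mul_mul_swapMat_conjTranspose,
      kronecker_submatrix_swap]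
  have hQsaM : (M * X).trace = (M * (ρ ⊗ₖ ρ)).trace := by
    simpa only [hQM, hM.eq] using (hQsa M (ρ ⊗ₖ ρ)).symm
  calc (L * ptrace2 X).trace = (L ⊗ₖ 1 * X).trace := trace_mul_ptrace2 L X
    _ = (M * X).trace / 2 := by
      rw [add_mul, trace_add, trace_mul_eq_of_submatrix_eq (Equiv.prodComm _ _)
        (kronecker_submatrix_swap 1 L) hX]
      ring
    _ = (L * ρ).trace := by
      rw [hQsaM, add_mul, ← mul_kronecker_mul, ← mul_kronecker_mul, trace_add, trace_kronecker,
        trace_kronecker, one_mul, hρtr]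
      ring

/-- **Collision invariance of `log ρ_∞`**: if `ρ_∞` is a strictly positive density matrix
with `ρ_∞ ⊗ ρ_∞` commuting with every `U(σ)`, then for every density matrix `ρ`,
`Tr[log(ρ_∞)·(ρ ⋆ ρ)] = Tr[log(ρ_∞)·ρ]`. Here `L = log ρ_∞` is the Hermitian matrix
with `exp L = ρ_∞`. -/
theorem log_steady_state_is_collision_invariant {C : Type*} [MetricSpace C]
    [CompactSpace C] [MeasurableSpace C] [BorelSpace C] {n : ℕ}
    (ν : Measure C) [IsProbabilityMeasure ν]
    (U : C → Matrix (Fin n × Fin n) (Fin n × Fin n) ℂ)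
    (hUcont : Continuous U)
    (hUunit : ∀ σ, U σ ∈ Matrix.unitaryGroup (Fin n × Fin n) ℂ)
    (hswap : ∀ X : Matrix (Fin n × Fin n) (Fin n × Fin n) ℂ,
      Qop ν U (swapMat * X * swapMatᴴ) = swapMat * Qop ν U X * swapMatᴴ)
    (hQsa : ∀ X Y : Matrix (Fin n × Fin n) (Fin n × Fin n) ℂ,
      ((Qop ν U X)ᴴ * Y).trace = (Xᴴ * Qop ν U Y).trace)
    (ρinf : Matrix (Fin n) (Fin n) ℂ) (hρinfpos : ρinf.PosDef) (hρinftr : ρinf.trace = 1)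
    (hρinfcomm : ∀ σ, Commute (U σ) (tensorMat ρinf ρinf))
    (L : Matrix (Fin n) (Fin n) ℂ) (hL : L.IsHermitian)
    (hexpL : NormedSpace.exp L = ρinf)
    (ρ : Matrix (Fin n) (Fin n) ℂ) (hρ : ρ.PosSemidef) (hρtr : ρ.trace = 1) :
    (L * wildConv ν U ρ ρ).trace = (L * ρ).trace :=
  log_steady_state_is_collision_invariant_general ν U hUunit hswap hQsa ρinf hρinfcomm L hL hexpL ρ
    hρtr
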